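/- arXiv:2407.19912 — 3 statements merged into one kernel-verified Lean document; each statement's English description precedes it below -/
import Mathlib

section
/- Every characteristic point of the strong SRRT contact Hamilton-Jacobi equation is a stationary point of its characteristic system: if $F(x,u,p)=0$ and $F_{p_1}(x,u,p)=F_{p_2}(x,u,p)=0$, then also $F_{x_i}(x,u,p)+p_iF_u(x,u,p)=0$ for $i=1,2$. Equivalently, writing $-F=P_1P_2^2-3Ve^{2u}P_1^2+(\Delta_0V)P_2^2$ with $P_1,P_2$ affine in $p$, at a point where $P_1=P_2=0$ one has $F_u=0$, $\partial F/\partial P_k=0$, $\partial F/\partial V=0$ and $\partial F/\partial(\Delta_0V)=0$. -/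
/-! With `a = A - H₀`, `b = B - H̃₀` and `K = 3e^{2u}V > 0` one has `F = -b²(a + Δ₀V) + K a²`.
In `p`, `A` is the derivative of `V` and `B` the derivative of `V` along the quarter-turned
direction, so `F_p = 0` with `∇V ≠ 0` forces both `∂F/∂a = 2Ka - b²` and `∂F/∂b = -2b(a + Δ₀V)`
to vanish; together with `F = 0` this gives `a = b = 0`. Then `F` vanishes to second order in
`(a, b)`, so its derivatives in `x` and in `u` vanish at the point. -/

def quarterTurn : ℝ × ℝ →L[ℝ] ℝ × ℝ :=
  (ContinuousLinearMap.snd ℝ ℝ ℝ).prod (-ContinuousLinearMap.fst ℝ ℝ ℝ)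

@[simp]
lemma quarterTurn_apply (q : ℝ × ℝ) : quarterTurn q = (q.2, -q.1) := rfl

lemma ContinuousLinearMap.apply_eq_fst_mul_add_snd_mul (L : ℝ × ℝ →L[ℝ] ℝ) (q : ℝ × ℝ) :
    L q = L (1, 0) * q.1 + L (0, 1) * q.2 := by
  conv_lhs => rw [show q = q.1 • ((1 : ℝ), (0 : ℝ)) + q.2 • ((0 : ℝ), (1 : ℝ)) by ext <;> simp]
  rw [map_add, map_smul, map_smul, smul_eq_mul, smul_eq_mul]
  ring

/-- `α • L + β • (L ∘ quarterTurn)` evaluated on the standard basis is the complex product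
`(α + iβ)(L(1,0) + iL(0,1))`, which has no zero divisors. -/
lemma eq_zero_of_smul_add_smul_comp_quarterTurn_eq_zero {L : ℝ × ℝ →L[ℝ] ℝ} (hL : L ≠ 0)
    {α β : ℝ} (h : α • L + β • L.comp quarterTurn = 0) : α = 0 ∧ β = 0 := by
  have hw : (⟨L (1, 0), L (0, 1)⟩ : ℂ) ≠ 0 := by
    refine fun hw => hL (ContinuousLinearMap.ext fun q => ?_)
    simp only [Complex.ext_iff, Complex.zero_re, Complex.zero_im] at hw
    simp [L.apply_eq_fst_mul_add_snd_mul q, hw.1, hw.2]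
  have h₁ := congr($h (1, 0))
  have h₂ := congr($h (0, 1))
  simp only [add_apply, smul_apply, ContinuousLinearMap.comp_apply, zero_apply,
    smul_eq_mul, quarterTurn_apply, neg_zero] at h₁ h₂
  have hneg : L (0, -1) = -L (0, 1) := by rw [← map_neg, Prod.neg_mk, neg_zero]
  have hprod : (⟨α, β⟩ : ℂ) * ⟨L (1, 0), L (0, 1)⟩ = 0 := by
    apply Complex.ext
    · simp only [Complex.mul_re, Complex.zero_re]
      linear_combination h₁ - β * hneg
    · simp only [Complex.mul_im, Complex.zero_im]
      linear_combination h₂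
  simpa [Complex.ext_iff] using (mul_eq_zero.mp hprod).resolve_right hw

section
variable {E : Type*} [NormedAddCommGroup E] [NormedSpace ℝ E]

lemma hasFDerivAt_neg_sq_mul_add_const_mul_sq (ℓ₁ ℓ₂ : E →L[ℝ] ℝ) (c₁ c₂ d K : ℝ) (q : E) :
    HasFDerivAt (fun q => -(ℓ₂ q - c₂) ^ 2 * (ℓ₁ q + d - c₁) + K * (ℓ₁ q - c₁) ^ 2)
      ((2 * K * (ℓ₁ q - c₁) - (ℓ₂ q - c₂) ^ 2) • ℓ₁
        + (-2 * (ℓ₂ q - c₂) * (ℓ₁ q - c₁ + d)) • ℓ₂) q := by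
  have h₁ := ℓ₁.hasFDerivAt (x := q)
  have h₂ := ℓ₂.hasFDerivAt (x := q)
  refine ((((h₂.sub_const c₂).pow 2).fun_neg.fun_mul ((h₁.add_const d).sub_const c₁)).fun_add
    (((h₁.sub_const c₁).pow 2).const_mul K)).congr_fderiv ?_
  ext v
  simp only [neg_smul, Nat.add_one_sub_one, pow_one, nsmul_eq_mul, Nat.cast_ofNat, smul_neg,
    add_apply, neg_apply, smul_apply, smul_eq_mul, neg_mul]
  ring

theorem HasFDerivAt.sq_mul_of_eq_zero {f g : E → ℝ} {x : E} (hf : DifferentiableAt ℝ f x)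
    (hg : DifferentiableAt ℝ g x) (hfx : f x = 0) :
    HasFDerivAt (fun y => f y ^ 2 * g y) (0 : E →L[ℝ] ℝ) x := by
  refine ((hf.hasFDerivAt.pow 2).fun_mul hg.hasFDerivAt).congr_fderiv ?_
  simp [hfx]

lemma ContDiff.differentiable_fderiv_apply {F : Type*} [NormedAddCommGroup F] [NormedSpace ℝ F]
    {V : E → F} (hV : ContDiff ℝ 2 V) (v : E) : Differentiable ℝ (fun y => fderiv ℝ V y v) :=
  ((hV.fderiv_right le_rfl).differentiable one_ne_zero).clm_apply (differentiable_const v)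

end

lemma eq_zero_of_critical_zero {K a b d : ℝ} (hK : K ≠ 0) (h : -b ^ 2 * (a + d) + K * a ^ 2 = 0)
    (ha : 2 * K * a - b ^ 2 = 0) (hb : -2 * b * (a + d) = 0) : a = 0 ∧ b = 0 := by
  have hKa : K * a ^ 2 = 0 := by linear_combination h - b / 2 * hb
  have ha0 : a = 0 := pow_eq_zero_iff two_ne_zero |>.mp ((mul_eq_zero.mp hKa).resolve_left hK)
  refine ⟨ha0, pow_eq_zero_iff two_ne_zero |>.mp ?_⟩
  linear_combination -ha + 2 * K * ha0

/-- every characteristic point of the strong SRRT contact Hamilton-Jacobi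
equation is a stationary point of its characteristic system: if `F(x,u,p) = 0` and the
momentum gradient `F_p(x,u,p)` vanishes, then `F_{x_i}(x,u,p) + p_i F_u(x,u,p) = 0` for
`i = 1, 2`. Here `F(x,u,p) = -(B - H̃₀)²(A + Δ₀V - H₀) + 3 e^{2u} V (A - H₀)²` with
`A(x,p) = ∂₁V(x) p₁ + ∂₂V(x) p₂`, `B(x,p) = -∂₂V(x) p₁ + ∂₁V(x) p₂`, where `V` is `C²`
with `V > 0`, `H₀, H̃₀, Δ₀V` are differentiable, and `x` is a noncritical point of `V`. -/
theorem strong_srrt_stmt11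
    (V H0 tH0 Δ0V : ℝ × ℝ → ℝ)
    (hV : ContDiff ℝ 2 V) (hH0 : Differentiable ℝ H0)
    (htH0 : Differentiable ℝ tH0) (hΔ : Differentiable ℝ Δ0V)
    (hVpos : ∀ x, 0 < V x)
    (A B : (ℝ × ℝ) → (ℝ × ℝ) → ℝ)
    (hA : ∀ x p, A x p = fderiv ℝ V x (1, 0) * p.1 + fderiv ℝ V x (0, 1) * p.2)
    (hB : ∀ x p, B x p = -(fderiv ℝ V x (0, 1)) * p.1 + fderiv ℝ V x (1, 0) * p.2)
    (F : (ℝ × ℝ) → ℝ → (ℝ × ℝ) → ℝ)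
    (hF : ∀ x u p, F x u p = -(B x p - tH0 x) ^ 2 * (A x p + Δ0V x - H0 x)
            + 3 * Real.exp (2 * u) * V x * (A x p - H0 x) ^ 2)
    (x : ℝ × ℝ) (u : ℝ) (p : ℝ × ℝ)
    (hgrad : fderiv ℝ V x ≠ 0)
    (h0 : F x u p = 0)
    (hp : fderiv ℝ (fun q => F x u q) p = 0) :
    fderiv ℝ (fun y => F y u p) x (1, 0) + p.1 * deriv (fun s => F x s p) u = 0
    ∧ fderiv ℝ (fun y => F y u p) x (0, 1) + p.2 * deriv (fun s => F x s p) u = 0 := by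
  set L := fderiv ℝ V x
  have hAL (q : ℝ × ℝ) : A x q = L q := (hA x q).trans (L.apply_eq_fst_mul_add_snd_mul q).symm
  have hBL (q : ℝ × ℝ) : B x q = (L.comp quarterTurn) q := by
    rw [hB, ContinuousLinearMap.comp_apply, L.apply_eq_fst_mul_add_snd_mul (quarterTurn q),
      quarterTurn_apply]
    ring
  have hK : 3 * Real.exp (2 * u) * V x ≠ 0 := by
    have := hVpos x
    positivity
  obtain ⟨ha, hb⟩ : A x p - H0 x = 0 ∧ B x p - tH0 x = 0 := by
    have hFp := hasFDerivAt_neg_sq_mul_add_const_mul_sq L (L.comp quarterTurn) (H0 x) (tH0 x)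
      (Δ0V x) (3 * Real.exp (2 * u) * V x) p
    simp only [← hAL, ← hBL, ← hF] at hFp
    obtain ⟨hα, hβ⟩ := eq_zero_of_smul_add_smul_comp_quarterTurn_eq_zero hgrad (hFp.fderiv ▸ hp)
    refine eq_zero_of_critical_zero hK ?_ hα hβ
    rw [hF] at h0
    linear_combination h0
  have hu : (fun s => F x s p) = fun _ => 0 := funext fun s => by simp [hF, ha, hb]
  have hVd : Differentiable ℝ V := hV.differentiable two_ne_zero
  have hdV₁ := hV.differentiable_fderiv_apply (1, 0)
  have hdV₂ := hV.differentiable_fderiv_apply (0, 1)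
  have hFx : (fun y => F y u p) = fun y => (A y p - H0 y) ^ 2 * (3 * Real.exp (2 * u) * V y)
      + (B y p - tH0 y) ^ 2 * -(A y p + Δ0V y - H0 y) := funext fun y => by rw [hF]; ring
  have hx : HasFDerivAt (fun y => F y u p) (0 : ℝ × ℝ →L[ℝ] ℝ) x := by
    have hdA : Differentiable ℝ fun y => A y p := by simp only [hA]; fun_prop
    have hdB : Differentiable ℝ fun y => B y p := by simp only [hB]; fun_prop
    rw [hFx]
    exact ((HasFDerivAt.sq_mul_of_eq_zero (f := fun y => A y p - H0 y) (by fun_prop)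
      (by fun_prop) ha).fun_add (HasFDerivAt.sq_mul_of_eq_zero (f := fun y => B y p - tH0 y)
        (by fun_prop) (by fun_prop) hb)).congr_fderiv (add_zero 0)
  simp [hx.fderiv, hu]
end

section
/- Let $\lambda_1\neq\lambda_2$ be nonzero reals with $\delta:=\lambda_1^2-10\lambda_1\lambda_2+\lambda_2^2\geq 0$. Then both roots $t_\pm(-\infty)=\frac{-2(\lambda_1+\lambda_2)\mp\sqrt{\delta}}{3(\lambda_1-\lambda_2)}$ (signs depending on $\mathrm{sign}(\lambda_1-\lambda_2)$) lie in the open interval $(-1,1)$. -/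
lemma aux_ioo (x d : ℝ) (hd : d ≠ 0) (h : x ^ 2 < d ^ 2) :
    x / d ∈ Set.Ioo (-1 : ℝ) 1 := by
  have habs : |x| < |d| := by
    nlinarith [abs_nonneg x, abs_nonneg d, sq_abs x, sq_abs d]
  have : |x / d| < 1 := by
    rw [abs_div, div_lt_one (abs_pos.mpr hd)]; exact habs
  exact abs_lt.mp this

/-- let `λ₁ ≠ λ₂` be nonzero reals with
`δ = λ₁² - 10 λ₁ λ₂ + λ₂² ≥ 0`. Then both roots
`t±(-∞) = (-2(λ₁+λ₂) ∓ √δ)/(3(λ₁-λ₂))` lie in the open interval `(-1, 1)`. -/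
theorem strong_srrt_stmt13 (l1 l2 : ℝ) (h1 : l1 ≠ 0) (h2 : l2 ≠ 0) (hne : l1 ≠ l2)
    (hδ : 0 ≤ l1 ^ 2 - 10 * l1 * l2 + l2 ^ 2) :
    ((-2 * (l1 + l2) + Real.sqrt (l1 ^ 2 - 10 * l1 * l2 + l2 ^ 2)) / (3 * (l1 - l2))
        ∈ Set.Ioo (-1 : ℝ) 1)
    ∧ ((-2 * (l1 + l2) - Real.sqrt (l1 ^ 2 - 10 * l1 * l2 + l2 ^ 2)) / (3 * (l1 - l2))
        ∈ Set.Ioo (-1 : ℝ) 1) := by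
  set s := Real.sqrt (l1 ^ 2 - 10 * l1 * l2 + l2 ^ 2) with hs
  have hs0 : 0 ≤ s := Real.sqrt_nonneg _
  have hs2 : s ^ 2 = l1 ^ 2 - 10 * l1 * l2 + l2 ^ 2 := Real.sq_sqrt hδ
  have hq2 : 0 < (l1 * l2) ^ 2 := by positivity
  have hM : 0 < l1 ^ 2 - 4 * l1 * l2 + l2 ^ 2 := by
    rcases le_or_gt (l1 * l2) 0 with h | h
    · nlinarith [sq_nonneg (l1 - l2), pow_pos (abs_pos.mpr h1) 2, sq_abs l1]
    · nlinarith
  have hd : (3 : ℝ) * (l1 - l2) ≠ 0 := by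
    have : l1 - l2 ≠ 0 := sub_ne_zero.mpr hne
    positivity
  have key1 : (-2 * (l1 + l2) + s) ^ 2 < (3 * (l1 - l2)) ^ 2 := by
    nlinarith [hM, hs2, hs0, hq2, mul_nonneg hs0 hs0]
  have key2 : (-2 * (l1 + l2) - s) ^ 2 < (3 * (l1 - l2)) ^ 2 := by
    nlinarith [hM, hs2, hs0, hq2, mul_nonneg hs0 hs0]
  exact ⟨aux_ioo _ _ hd key1, aux_ioo _ _ hd key2⟩
end

section
/- Let $\lambda_1\neq\lambda_2$ be nonzero reals. The function $\phi(r,\theta)=\phi_0(\theta)+Q_0\big(\frac{\lambda_2-\lambda_1}{\lambda_1\lambda_2}\log r+\frac{1}{\lambda_1}\log|\cos\theta|-\frac{1}{\lambda_2}\log|\sin\theta|\big)$, where $\phi_0(\theta)=\frac14\log(\lambda_1^2\cos^2\theta+\lambda_2^2\sin^2\theta)-\frac12\frac{\lambda_2\log|\cos\theta|-\lambda_1\log|\sin\theta|}{\lambda_2-\lambda_1}$ and $Q_0$ is any differentiable function of one variable, solves the linear PDE $2s_2(x)(\lambda_1 x_1\partial_1\phi+\lambda_2 x_2\partial_2\phi)=s_3(x)$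 on the region $x_1x_2\neq 0$, where $x_1=r\cos\theta$, $x_2=r\sin\theta$, $s_k(x)=\lambda_1^k x_1^2+\lambda_2^k x_2^2$. -/
/-!
Away from the axes the solution depends on `x` only through `log |x₁|`, `log |x₂|` and
`log s₂(x)`: the `log r` terms cancel, so the `Φ` of the statement is
`¼ log s₂ - ½ (λ₂ log |x₁| - λ₁ log |x₂|)/(λ₂ - λ₁) + Q₀(log |x₁|/λ₁ - log |x₂|/λ₂)`.
The operator `λ₁ x₁ ∂₁ + λ₂ x₂ ∂₂` sends `c log |x₁| + d log |x₂|` to the constant `c λ₁ + d λ₂`,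
so it annihilates the middle term and the argument of `Q₀` (a first integral of the field), and
it sends `log s₂` to `2 s₃ / s₂`.
-/

open Real Filter Topology ContinuousLinearMap

theorem map_mk_eq_smul_add_smul {𝕜 M F : Type*} [Semiring 𝕜] [AddCommMonoid M] [Module 𝕜 M]
    [FunLike F (𝕜 × 𝕜) M] [LinearMapClass F 𝕜 (𝕜 × 𝕜) M] (L : F) (a b : 𝕜) :
    L (a, b) = a • L (1, 0) + b • L (0, 1) := by
  rw [← map_smul, ← map_smul, ← map_add]
  simp

theorem log_abs_div_sqrt {u w : ℝ} (hu : u ≠ 0) (hw : 0 < w) :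
    log (|u| / √w) = log u - log w / 2 := by
  rw [log_div (abs_ne_zero.mpr hu) (sqrt_ne_zero'.mpr hw), log_abs, log_sqrt hw.le]

section EulerField

variable {x : ℝ × ℝ}

theorem hasFDerivAt_logCombination (c d : ℝ) (hx1 : x.1 ≠ 0) (hx2 : x.2 ≠ 0) :
    HasFDerivAt (fun p : ℝ × ℝ => c * log p.1 + d * log p.2)
      ((c * x.1⁻¹) • fst ℝ ℝ ℝ + (d * x.2⁻¹) • snd ℝ ℝ ℝ) x := by
  have h1 := ((hasFDerivAt_fst (𝕜 := ℝ) (p := x)).log hx1).const_mul c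
  have h2 := ((hasFDerivAt_snd (𝕜 := ℝ) (p := x)).log hx2).const_mul d
  simp only [smul_smul] at h1 h2
  exact h1.add h2

theorem fderiv_logCombination_apply (a b c d : ℝ) (hx1 : x.1 ≠ 0) (hx2 : x.2 ≠ 0) :
    fderiv ℝ (fun p : ℝ × ℝ => c * log p.1 + d * log p.2) x (a * x.1, b * x.2)
      = c * a + d * b := by
  rw [(hasFDerivAt_logCombination c d hx1 hx2).fderiv]
  simp only [add_apply, smul_apply, coe_fst', coe_snd', smul_eq_mul]
  field_simp

theorem hasFDerivAt_log_weightedSqSum (a b : ℝ) (hs : a ^ 2 * x.1 ^ 2 + b ^ 2 * x.2 ^ 2 ≠ 0) :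
    HasFDerivAt (fun p : ℝ × ℝ => log (a ^ 2 * p.1 ^ 2 + b ^ 2 * p.2 ^ 2))
      ((a ^ 2 * x.1 ^ 2 + b ^ 2 * x.2 ^ 2)⁻¹ •
        ((a ^ 2 * (2 * x.1)) • fst ℝ ℝ ℝ + (b ^ 2 * (2 * x.2)) • snd ℝ ℝ ℝ)) x := by
  have h1 := ((hasDerivAt_pow 2 x.1).comp_hasFDerivAt x
    (hasFDerivAt_fst (𝕜 := ℝ))).const_mul (a ^ 2)
  have h2 := ((hasDerivAt_pow 2 x.2).comp_hasFDerivAt x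
    (hasFDerivAt_snd (𝕜 := ℝ))).const_mul (b ^ 2)
  simpa [Function.comp_def, smul_smul] using (h1.add h2).log hs

theorem fderiv_log_weightedSqSum_apply (a b : ℝ) (hs : a ^ 2 * x.1 ^ 2 + b ^ 2 * x.2 ^ 2 ≠ 0) :
    fderiv ℝ (fun p : ℝ × ℝ => log (a ^ 2 * p.1 ^ 2 + b ^ 2 * p.2 ^ 2)) x (a * x.1, b * x.2)
      = 2 * (a ^ 3 * x.1 ^ 2 + b ^ 3 * x.2 ^ 2) / (a ^ 2 * x.1 ^ 2 + b ^ 2 * x.2 ^ 2) := by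
  rw [(hasFDerivAt_log_weightedSqSum a b hs).fderiv]
  simp only [add_apply, smul_apply, coe_fst', coe_snd', smul_eq_mul]
  field_simp

end EulerField

theorem solution_eq_of_ne_zero {l1 l2 : ℝ} (h1 : l1 ≠ 0) (h2 : l2 ≠ 0) (hne : l1 ≠ l2)
    (Q0 : ℝ → ℝ) {u v : ℝ} (hu : u ≠ 0) (hv : v ≠ 0) :
    (1/4) * log ((l1 ^ 2 * u ^ 2 + l2 ^ 2 * v ^ 2) / (u ^ 2 + v ^ 2))
      - (1/2) * (l2 * log (|u| / √(u ^ 2 + v ^ 2)) - l1 * log (|v| / √(u ^ 2 + v ^ 2))) / (l2 - l1)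
      + Q0 ((l2 - l1) / (l1 * l2) * log (√(u ^ 2 + v ^ 2))
            + (1 / l1) * log (|u| / √(u ^ 2 + v ^ 2))
            - (1 / l2) * log (|v| / √(u ^ 2 + v ^ 2)))
    = (1/4) * log (l1 ^ 2 * u ^ 2 + l2 ^ 2 * v ^ 2)
      + (-(1/2) / (l2 - l1)) * (l2 * log u + -l1 * log v)
      + Q0 ((1 / l1) * log u + -(1 / l2) * log v) := by
  have hw : 0 < u ^ 2 + v ^ 2 := by positivity
  have hl : l2 - l1 ≠ 0 := sub_ne_zero.mpr hne.symm
  rw [log_div (by positivity) hw.ne', log_abs_div_sqrt hu hw, log_abs_div_sqrt hv hw,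
    log_sqrt hw.le]
  congr 2
  · field_simp
    ring
  · field_simp
    ring

/-- let `λ₁ ≠ λ₂` be nonzero reals. The function
`φ(r,θ) = φ₀(θ) + Q₀((λ₂-λ₁)/(λ₁λ₂) log r + (1/λ₁) log|cos θ| - (1/λ₂) log|sin θ|)`, with
`φ₀(θ) = ¼ log(λ₁² cos²θ + λ₂² sin²θ) - ½ (λ₂ log|cos θ| - λ₁ log|sin θ|)/(λ₂-λ₁)` and `Q₀`
any differentiable function of one variable, solves the linear PDE
`2 s₂(x) (λ₁ x₁ ∂₁φ + λ₂ x₂ ∂₂φ) = s₃(x)` on the region `x₁ x₂ ≠ 0`, where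
`x₁ = r cos θ`, `x₂ = r sin θ` and `s_k(x) = λ₁^k x₁² + λ₂^k x₂²`. (Here the solution is
written in Cartesian coordinates via `r = √(x₁²+x₂²)`, `|cos θ| = |x₁|/r`,
`|sin θ| = |x₂|/r`.) -/
theorem strong_srrt_stmt15 (l1 l2 : ℝ) (h1 : l1 ≠ 0) (h2 : l2 ≠ 0) (hne : l1 ≠ l2)
    (Q0 : ℝ → ℝ) (hQ0 : Differentiable ℝ Q0)
    (Φ : ℝ × ℝ → ℝ)
    (hΦ : ∀ x : ℝ × ℝ, Φ x =
      (1/4) * Real.log ((l1 ^ 2 * x.1 ^ 2 + l2 ^ 2 * x.2 ^ 2) / (x.1 ^ 2 + x.2 ^ 2))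
      - (1/2) * (l2 * Real.log (|x.1| / Real.sqrt (x.1 ^ 2 + x.2 ^ 2))
                 - l1 * Real.log (|x.2| / Real.sqrt (x.1 ^ 2 + x.2 ^ 2))) / (l2 - l1)
      + Q0 ((l2 - l1) / (l1 * l2) * Real.log (Real.sqrt (x.1 ^ 2 + x.2 ^ 2))
            + (1 / l1) * Real.log (|x.1| / Real.sqrt (x.1 ^ 2 + x.2 ^ 2))
            - (1 / l2) * Real.log (|x.2| / Real.sqrt (x.1 ^ 2 + x.2 ^ 2)))) :
    ∀ x : ℝ × ℝ, x.1 ≠ 0 → x.2 ≠ 0 →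
      2 * (l1 ^ 2 * x.1 ^ 2 + l2 ^ 2 * x.2 ^ 2) *
          (l1 * x.1 * fderiv ℝ Φ x (1, 0) + l2 * x.2 * fderiv ℝ Φ x (0, 1))
        = l1 ^ 3 * x.1 ^ 2 + l2 ^ 3 * x.2 ^ 2 := by
  intro x hx1 hx2
  have hs : l1 ^ 2 * x.1 ^ 2 + l2 ^ 2 * x.2 ^ 2 ≠ 0 := by positivity
  have hloc : Φ =ᶠ[𝓝 x] fun p => (1/4) * log (l1 ^ 2 * p.1 ^ 2 + l2 ^ 2 * p.2 ^ 2)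
      + (-(1/2) / (l2 - l1)) * (l2 * log p.1 + -l1 * log p.2)
      + Q0 ((1 / l1) * log p.1 + -(1 / l2) * log p.2) := by
    filter_upwards [continuousAt_fst.eventually_ne hx1, continuousAt_snd.eventually_ne hx2]
      with p hp1 hp2
    rw [hΦ, solution_eq_of_ne_zero h1 h2 hne Q0 hp1 hp2]
  have hS := (hasFDerivAt_log_weightedSqSum l1 l2 hs).differentiableAt.hasFDerivAt
  have hL := (hasFDerivAt_logCombination l2 (-l1) hx1 hx2).differentiableAt.hasFDerivAt
  have hW := (hasFDerivAt_logCombination (1 / l1) (-(1 / l2)) hx1 hx2).differentiableAt.hasFDerivAt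
  have hΨ := ((hS.const_mul (1/4)).add (hL.const_mul (-(1/2) / (l2 - l1)))).add
    ((hQ0 _).hasDerivAt.comp_hasFDerivAt x hW)
  rw [← smul_eq_mul (l1 * x.1), ← smul_eq_mul (l2 * x.2), ← map_mk_eq_smul_add_smul,
    (hΨ.congr_of_eventuallyEq hloc).fderiv]
  simp only [add_apply, smul_apply, smul_eq_mul]
  rw [fderiv_log_weightedSqSum_apply l1 l2 hs, fderiv_logCombination_apply _ _ _ _ hx1 hx2,
    fderiv_logCombination_apply _ _ _ _ hx1 hx2]
  field_simp
  ring
end
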